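/- The local alignment kernel with linear gap penalty is a special case of the relaxed substring kernel: if g(x) = cx and s(a,b) = ⟨ψ_s(a), ψ_s(b)⟩ with ‖ψ_s(a)‖² = 1 for all characters a, then K_LA^k(x,x') = Σ_{(i,j) ∈ I_{x,k}×I_{x',k}} e^{-cβ·gaps(i)} e^{-cβ·gaps(j)} Π_{t=1}^k e^{β s(x_{i_t}, x'_{j_t})}, which equals e^{βk} · K_k(x,x') with weights λ_{x,i} = e^{-cβ·gaps(i)}, α = β, and character embedding √β-scaled ψ_s composed with the Gaussian relaxation. -/

import Mathlib

open scoped RealInnerProductSpace Classical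

/-- Number of gaps of a strictly increasing index tuple: `gaps(i) = i_k - i₁ - k + 1`. -/
def gaps : {k m : ℕ} → (Fin k → Fin m) → ℕ
  | 0, _, _ => 0
  | k + 1, _, i => (i (Fin.last k) : ℕ) - (i 0 : ℕ) - k


lemma le_apply_of_sm {k m : ℕ} {i : Fin (k+1) → Fin m} (hi : StrictMono i) :
    ∀ n (h : n ≤ k), (i 0 : ℕ) + n ≤ (i ⟨n, Nat.lt_succ_of_le h⟩ : ℕ) := by
  intro n
  induction n with
  | zero => intro h; simp
  | succ n ih =>
    intro h
    have h1 : n ≤ k := Nat.le_of_succ_le h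
    have h2 := ih h1
    have hlt : (⟨n, Nat.lt_succ_of_le h1⟩ : Fin (k+1)) < ⟨n+1, Nat.lt_succ_of_le h⟩ := by
      simp [Fin.lt_def]
    have h3 := Fin.lt_def.mp (hi hlt)
    omega

lemma sum_gap {k m : ℕ} (i : Fin (k+1) → Fin m) (hi : StrictMono i) :
    (∑ t : Fin k, (((i t.succ : ℕ) - (i t.castSucc : ℕ) - 1 : ℕ) : ℝ)) = (gaps i : ℝ) := by
  have key : ∀ t : Fin k, (i t.castSucc : ℕ) + 1 ≤ (i t.succ : ℕ) := by
    intro t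
    exact Fin.lt_def.mp (hi (Fin.castSucc_lt_succ : t.castSucc < t.succ))
  have h1 : ∀ t : Fin k, (((i t.succ : ℕ) - (i t.castSucc : ℕ) - 1 : ℕ) : ℝ)
      = ((i t.succ : ℕ) : ℝ) - ((i t.castSucc : ℕ) : ℝ) - 1 := by
    intro t
    have h := key t
    rw [Nat.cast_sub (by omega), Nat.cast_sub (by omega)]
    simp
  rw [Finset.sum_congr rfl (fun t _ => h1 t)]
  set f : ℕ → ℝ := fun n => ((i ⟨min n k, by omega⟩ : ℕ) : ℝ) with hf
  have e1 : ∀ t : Fin k, ((i t.succ : ℕ) : ℝ) = f ((t : ℕ) + 1) := by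
    intro t
    have h : t.succ = (⟨min ((t : ℕ) + 1) k, by omega⟩ : Fin (k+1)) := by
      apply Fin.ext
      simp
    rw [h]
  have e2 : ∀ t : Fin k, ((i t.castSucc : ℕ) : ℝ) = f (t : ℕ) := by
    intro t
    have h : t.castSucc = (⟨min (t : ℕ) k, by omega⟩ : Fin (k+1)) := by
      apply Fin.ext
      simp
    rw [h]
  have htel : (∑ t : Fin k, (((i t.succ : ℕ) : ℝ) - ((i t.castSucc : ℕ) : ℝ) - 1))
      = f k - f 0 - k := by
    rw [Finset.sum_congr rfl (fun t _ => by rw [e1 t, e2 t])]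
    rw [Fin.sum_univ_eq_sum_range (fun n => f (n+1) - f n - 1)]
    rw [Finset.sum_sub_distrib, Finset.sum_range_sub f k]
    simp
  rw [htel]
  have hfk : f k = ((i (Fin.last k) : ℕ) : ℝ) := by
    have h : (⟨min k k, by omega⟩ : Fin (k+1)) = Fin.last k := by
      apply Fin.ext; simp
    simp only [hf]
    rw [h]
  have hf0 : f 0 = ((i 0 : ℕ) : ℝ) := by
    have h : (⟨min 0 k, by omega⟩ : Fin (k+1)) = 0 := by
      apply Fin.ext; simp
    simp only [hf]
    rw [h]
  have hle : (i 0 : ℕ) + k ≤ (i (Fin.last k) : ℕ) := le_apply_of_sm hi k le_rfl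
  show _ = ((gaps i : ℕ) : ℝ)
  unfold gaps
  rw [hfk, hf0, Nat.cast_sub (by omega), Nat.cast_sub (by omega)]

/-- The local alignment kernel with linear gap penalty `g(x) = cx` and substitution function
`s(a,b) = ⟨ψ_s(a), ψ_s(b)⟩` with unit-norm embeddings is a special case of the relaxed
substring kernel: `K_LA^k(x,x')` equals the double sum with weights `e^{-cβ·gaps}` of the
products `Π_t e^{β s(x_{i_t}, x'_{j_t})}`, which equals `e^{βk} K_k(x,x')` where `K_k` uses
`λ_{x,i} = e^{-cβ·gaps(i)}` and `α = β` (here `k`-mers have length `k+1`). -/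
theorem local_alignment_special_case {A H : Type*}
    [NormedAddCommGroup H] [InnerProductSpace ℝ H]
    (k m m' : ℕ) (β c : ℝ) (hβ : 0 < β) (hc : 0 < c)
    (ψs : A → H) (hψ : ∀ a, ‖ψs a‖ = 1)
    (x : Fin m → A) (y : Fin m' → A) :
    (∑ i : Fin (k + 1) → Fin m, ∑ j : Fin (k + 1) → Fin m',
      if StrictMono i ∧ StrictMono j then
        Real.exp (β * ((∑ t : Fin (k + 1), ⟪ψs (x (i t)), ψs (y (j t))⟫)
          - (∑ t : Fin k, c * (((i t.succ : ℕ) - (i t.castSucc : ℕ) - 1 : ℕ) : ℝ))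
          - (∑ t : Fin k, c * (((j t.succ : ℕ) - (j t.castSucc : ℕ) - 1 : ℕ) : ℝ))))
      else 0)
    = (∑ i : Fin (k + 1) → Fin m, ∑ j : Fin (k + 1) → Fin m',
        if StrictMono i ∧ StrictMono j then
          Real.exp (-(c * β) * (gaps i : ℝ)) * Real.exp (-(c * β) * (gaps j : ℝ)) *
            ∏ t : Fin (k + 1), Real.exp (β * ⟪ψs (x (i t)), ψs (y (j t))⟫)
        else 0)
    ∧ (∑ i : Fin (k + 1) → Fin m, ∑ j : Fin (k + 1) → Fin m',
        if StrictMono i ∧ StrictMono j then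
          Real.exp (-(c * β) * (gaps i : ℝ)) * Real.exp (-(c * β) * (gaps j : ℝ)) *
            ∏ t : Fin (k + 1), Real.exp (β * ⟪ψs (x (i t)), ψs (y (j t))⟫)
        else 0)
      = Real.exp (β * (k + 1)) *
        ∑ i : Fin (k + 1) → Fin m, ∑ j : Fin (k + 1) → Fin m',
          if StrictMono i ∧ StrictMono j then
            Real.exp (-(c * β) * (gaps i : ℝ)) * Real.exp (-(c * β) * (gaps j : ℝ)) *
              ∏ t : Fin (k + 1), Real.exp (β * (⟪ψs (x (i t)), ψs (y (j t))⟫ - 1))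
          else 0 := by
  constructor
  · apply Finset.sum_congr rfl
    intro i _
    apply Finset.sum_congr rfl
    intro j _
    split_ifs with h
    · obtain ⟨hi, hj⟩ := h
      rw [← Real.exp_sum, ← Real.exp_add, ← Real.exp_add]
      congr 1
      have hgi : (∑ t : Fin k, c * (((i t.succ : ℕ) - (i t.castSucc : ℕ) - 1 : ℕ) : ℝ))
          = c * (gaps i : ℝ) := by
        rw [← Finset.mul_sum, sum_gap i hi]
      have hgj : (∑ t : Fin k, c * (((j t.succ : ℕ) - (j t.castSucc : ℕ) - 1 : ℕ) : ℝ))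
          = c * (gaps j : ℝ) := by
        rw [← Finset.mul_sum, sum_gap j hj]
      rw [hgi, hgj, ← Finset.mul_sum]
      ring
    · rfl
  · rw [Finset.mul_sum]
    apply Finset.sum_congr rfl
    intro i _
    rw [Finset.mul_sum]
    apply Finset.sum_congr rfl
    intro j _
    split_ifs with h
    · have hp : (∏ t : Fin (k + 1), Real.exp (β * ⟪ψs (x (i t)), ψs (y (j t))⟫))
          = Real.exp (β * (k + 1)) *
            ∏ t : Fin (k + 1), Real.exp (β * (⟪ψs (x (i t)), ψs (y (j t))⟫ - 1)) := by
        rw [← Real.exp_sum, ← Real.exp_sum, ← Real.exp_add]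
        congr 1
        have : (∑ t : Fin (k + 1), β * (⟪ψs (x (i t)), ψs (y (j t))⟫ - 1))
            = (∑ t : Fin (k + 1), β * ⟪ψs (x (i t)), ψs (y (j t))⟫) - β * (k + 1) := by
          simp only [mul_sub, mul_one, Finset.sum_sub_distrib, Finset.sum_const,
            Finset.card_univ, Fintype.card_fin, nsmul_eq_mul]
          push_cast
          ring
        rw [this]
        ring
      rw [hp]
      ring
    · simp
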